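/- The map G ↦ L_G gives a bijection between unmixed bipartite graphs on {x_1,...,x_n} ∪ {y_1,...,y_n} (containing the matching {x_i,y_i}) and sublattices L of the Boolean lattice on [n] with ∅, [n] ∈ L. In particular, distinct such graphs have distinct lattices L_G. -/

import Mathlib

/-!
In an unmixed bipartite graph `G` with perfect matching `{xᵢ, yᵢ}`, comparing with the cover
`{y₁, …, yₙ}` shows that every minimal vertex cover has `n` elements, so it contains exactly one
endpoint of each matching edge and is determined by its x-part `S`. Hence `L_G` is the family of
`S` for which `{xᵢ : i ∈ S} ∪ {yⱼ : j ∉ S}` covers `G`, and `xₐ ~ y_c` holds iff every member of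
`L_G` containing `c` contains `a`: if not, the minimal covers inside
`({y₁, …, yₙ} \ {y_c}) ∪ N(y_c)` separate `c` from `a`. So `G` is recovered from `L_G`.

Conversely, `L` is the family of lower sets of the preorder `i ≤ j :⇔ every member of L
containing j contains i`: the principal lower set of `j` is the intersection of the members
containing `j`, and every lower set is the union of its principal lower sets. The bipartite
graph with `xᵢ ~ yⱼ :⇔ i ≤ j` has exactly these lower sets as x-parts of its minimal covers.
-/

open Finset

/-- `C` is a vertex cover of the graph `G`. -/
def IsVC {α : Type*} (G : SimpleGraph α) (C : Finset α) : Prop :=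
  ∀ ⦃u v : α⦄, G.Adj u v → u ∈ C ∨ v ∈ C

/-- `C` is a minimal vertex cover of the graph `G`. -/
def IsMinVC {α : Type*} (G : SimpleGraph α) (C : Finset α) : Prop :=
  IsVC G C ∧ ∀ C' ⊂ C, ¬ IsVC G C'

/-- `G` is unmixed: all minimal vertex covers have the same cardinality. -/
def Unmixed {α : Type*} (G : SimpleGraph α) : Prop :=
  ∀ C C' : Finset α, IsMinVC G C → IsMinVC G C' → C.card = C'.card

/-- `G` is bipartite with respect to the given sum decomposition of its vertex set:
all edges go between the two parts. -/
def Bip {m n : ℕ} (G : SimpleGraph (Fin m ⊕ Fin n)) : Prop :=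
  (∀ i j, ¬ G.Adj (Sum.inl i) (Sum.inl j)) ∧ ∀ i j, ¬ G.Adj (Sum.inr i) (Sum.inr j)

/-- the set `{x_i : i ∈ S} ∪ {y_j : j ∉ S}`, where `x_i = Sum.inl i`, `y_j = Sum.inr j`. -/
def coverOf {n : ℕ} (S : Finset (Fin n)) : Finset (Fin n ⊕ Fin n) :=
  S.image Sum.inl ∪ Sᶜ.image Sum.inr

/-- the "x-part" `C̄ = {i : x_i ∈ C}` of a set of vertices `C`. -/
def xpart {n : ℕ} (C : Finset (Fin n ⊕ Fin n)) : Finset (Fin n) :=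
  Finset.univ.filter fun i => Sum.inl i ∈ C

/-- the lattice `L_G` of x-parts of minimal vertex covers of `G` -/
def latticeOf {n : ℕ} (G : SimpleGraph (Fin n ⊕ Fin n)) : Set (Finset (Fin n)) :=
  {S | ∃ C : Finset (Fin n ⊕ Fin n), IsMinVC G C ∧ S = xpart C}

section VertexCover

variable {α : Type*} {G : SimpleGraph α}

lemma isMinVC_iff_minimal {C : Finset α} : IsMinVC G C ↔ Minimal (IsVC G) C :=
  minimal_iff_forall_lt.symm

lemma IsVC.exists_isMinVC_subset {D : Finset α} (hD : IsVC G D) : ∃ C ⊆ D, IsMinVC G C := by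
  simpa only [isMinVC_iff_minimal] using exists_minimal_le_of_wellFoundedLT _ D hD

lemma IsVC.erase_union_neighbors [Fintype α] [DecidableEq α] [DecidableRel G.Adj]
    {D : Finset α} (hD : IsVC G D) (w : α) :
    IsVC G (D.erase w ∪ G.neighborFinset w) := by
  intro u v huv
  by_cases hu : u = w
  · subst hu
    exact Or.inr (by simp [huv])
  by_cases hv : v = w
  · subst hv
    exact Or.inl (by simp [huv.symm])
  rcases hD huv with h | h
  · exact Or.inl (by simp [hu, h])
  · exact Or.inr (by simp [hv, h])

lemma IsMinVC.exists_adj_notMem [DecidableEq α] {C : Finset α} (hC : IsMinVC G C) {v : α}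
    (hv : v ∈ C) : ∃ w, G.Adj v w ∧ w ∉ C := by
  by_contra! h
  have hcover : ∀ x y, G.Adj x y → x ∈ C → x ∈ C.erase v ∨ y ∈ C.erase v := by
    intro x y hxy hx
    by_cases hxv : x = v
    · subst hxv
      exact Or.inr (mem_erase.2 ⟨hxy.ne.symm, h y hxy⟩)
    · exact Or.inl (mem_erase.2 ⟨hxv, hx⟩)
  refine hC.2 _ (erase_ssubset hv) fun x y hxy => ?_
  rcases hC.1 hxy with hx | hy
  · exact hcover x y hxy hx
  · exact (hcover y x hxy.symm hy).symm

end VertexCover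

section CoverOf

variable {n : ℕ} {G : SimpleGraph (Fin n ⊕ Fin n)}

@[simp]
lemma inl_mem_coverOf {S : Finset (Fin n)} {i : Fin n} : Sum.inl i ∈ coverOf S ↔ i ∈ S := by
  simp [coverOf]

@[simp]
lemma inr_mem_coverOf {S : Finset (Fin n)} {i : Fin n} : Sum.inr i ∈ coverOf S ↔ i ∉ S := by
  simp [coverOf]

@[simp]
lemma mem_xpart {C : Finset (Fin n ⊕ Fin n)} {i : Fin n} : i ∈ xpart C ↔ Sum.inl i ∈ C := by
  simp [xpart]

@[simp]
lemma xpart_coverOf (S : Finset (Fin n)) : xpart (coverOf S) = S := by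
  ext
  simp

lemma card_coverOf (S : Finset (Fin n)) : (coverOf S).card = n := by
  rw [coverOf, card_union_of_disjoint, card_image_of_injective _ Sum.inl_injective,
    card_image_of_injective _ Sum.inr_injective, card_add_card_compl, Fintype.card_fin]
  simp [disjoint_left]

lemma coverOf_xpart_subset (hM : ∀ i, G.Adj (Sum.inl i) (Sum.inr i))
    {C : Finset (Fin n ⊕ Fin n)} (hC : IsVC G C) : coverOf (xpart C) ⊆ C := by
  rintro (i | i) h
  · simpa using h
  · simp only [inr_mem_coverOf, mem_xpart] at h
    exact (hC (hM i)).resolve_left h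

lemma IsVC.isMinVC_coverOf (hM : ∀ i, G.Adj (Sum.inl i) (Sum.inr i)) {S : Finset (Fin n)}
    (hS : IsVC G (coverOf S)) : IsMinVC G (coverOf S) := by
  refine ⟨hS, fun C hC hvc => ?_⟩
  have := card_lt_card ((coverOf_xpart_subset hM hvc).trans_ssubset hC)
  rw [card_coverOf, card_coverOf] at this
  exact lt_irrefl n this

lemma latticeOf_eq_setOf_isVC (hM : ∀ i, G.Adj (Sum.inl i) (Sum.inr i))
    (h : ∀ C, IsMinVC G C → C = coverOf (xpart C)) :
    latticeOf G = {S | IsVC G (coverOf S)} := by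
  ext S
  constructor
  · rintro ⟨C, hC, rfl⟩
    show IsVC G (coverOf (xpart C))
    exact h C hC ▸ hC.1
  · intro hS
    exact ⟨coverOf S, IsVC.isMinVC_coverOf hM hS, (xpart_coverOf S).symm⟩

end CoverOf

section RelGraph

variable {n : ℕ}

def IsLowerFor (r : Fin n → Fin n → Prop) (S : Finset (Fin n)) : Prop :=
  ∀ ⦃i j⦄, r i j → j ∈ S → i ∈ S

def bipartiteOfRel (r : Fin n → Fin n → Prop) : SimpleGraph (Fin n ⊕ Fin n) where
  Adj
    | Sum.inl i, Sum.inr j => r i j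
    | Sum.inr j, Sum.inl i => r i j
    | _, _ => False
  symm := ⟨by rintro (i | i) (j | j) h <;> exact h⟩
  loopless := ⟨by rintro (i | i) h <;> exact h⟩

variable {r : Fin n → Fin n → Prop}

@[simp]
lemma bipartiteOfRel_adj_inl_inr {i j : Fin n} :
    (bipartiteOfRel r).Adj (Sum.inl i) (Sum.inr j) ↔ r i j :=
  Iff.rfl

lemma bip_bipartiteOfRel : Bip (bipartiteOfRel r) :=
  ⟨fun _ _ => id, fun _ _ => id⟩

lemma isVC_coverOf_bipartiteOfRel_iff {S : Finset (Fin n)} :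
    IsVC (bipartiteOfRel r) (coverOf S) ↔ IsLowerFor r S := by
  constructor
  · intro h i j hij hj
    simpa [hj] using h (u := Sum.inl i) (v := Sum.inr j) hij
  · rintro h (i | i) (j | j) hij
    · exact hij.elim
    · simp only [inl_mem_coverOf, inr_mem_coverOf]
      exact (em (j ∈ S)).imp_left (h hij)
    · simp only [inl_mem_coverOf, inr_mem_coverOf]
      exact (em (i ∈ S)).symm.imp_right (h hij)
    · exact hij.elim

lemma eq_coverOf_xpart_of_isMinVC_bipartiteOfRel (hr : ∀ i, r i i)
    (ht : ∀ ⦃i j k⦄, r i j → r j k → r i k)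
    {C : Finset (Fin n ⊕ Fin n)} (hC : IsMinVC (bipartiteOfRel r) C) :
    C = coverOf (xpart C) := by
  classical
  have hlower : IsLowerFor r (xpart C) := by
    intro i j hij hj
    rw [mem_xpart] at hj ⊢
    -- a private neighbour `y_k` of `x_j` makes `x_i y_k` an edge, which `C` must cover by `x_i`
    obtain ⟨_ | k, hjk, hk⟩ := hC.exists_adj_notMem hj
    · exact hjk.elim
    · exact (hC.1 (bipartiteOfRel_adj_inl_inr.2 (ht hij hjk))).resolve_right hk
  refine ((coverOf_xpart_subset hr hC.1).eq_or_ssubset.resolve_right fun hsub => ?_).symm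
  exact hC.2 _ hsub (isVC_coverOf_bipartiteOfRel_iff.2 hlower)

lemma unmixed_bipartiteOfRel (hr : ∀ i, r i i)
    (ht : ∀ ⦃i j k⦄, r i j → r j k → r i k) :
    Unmixed (bipartiteOfRel r) := by
  intro C C' hC hC'
  rw [eq_coverOf_xpart_of_isMinVC_bipartiteOfRel hr ht hC,
    eq_coverOf_xpart_of_isMinVC_bipartiteOfRel hr ht hC', card_coverOf, card_coverOf]

lemma latticeOf_bipartiteOfRel (hr : ∀ i, r i i)
    (ht : ∀ ⦃i j k⦄, r i j → r j k → r i k) :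
    latticeOf (bipartiteOfRel r) = {S | IsLowerFor r S} := by
  rw [latticeOf_eq_setOf_isVC hr fun _ => eq_coverOf_xpart_of_isMinVC_bipartiteOfRel hr ht]
  simp only [isVC_coverOf_bipartiteOfRel_iff]

end RelGraph

section LatticeRel

variable {n : ℕ} {L : Set (Finset (Fin n))}

def latticeRel (L : Set (Finset (Fin n))) (i j : Fin n) : Prop :=
  ∀ S ∈ L, j ∈ S → i ∈ S

lemma latticeRel_refl (i : Fin n) : latticeRel L i i :=
  fun _ _ => id

lemma latticeRel_trans {i j k : Fin n} (hij : latticeRel L i j) (hjk : latticeRel L j k) :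
    latticeRel L i k :=
  fun S hS hk => hij S hS (hjk S hS hk)

lemma isLowerFor_latticeRel_iff (hempty : (∅ : Finset (Fin n)) ∈ L)
    (huniv : (univ : Finset (Fin n)) ∈ L) (hcl : ∀ S ∈ L, ∀ T ∈ L, S ∪ T ∈ L ∧ S ∩ T ∈ L)
    {S : Finset (Fin n)} : IsLowerFor (latticeRel L) S ↔ S ∈ L := by
  classical
  refine ⟨fun hS => ?_, fun hS _ _ hij => hij S hS⟩
  set down : Fin n → Finset (Fin n) := fun j =>
    ({T | T ∈ L ∧ j ∈ T} : Finset (Finset (Fin n))).inf id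
  have hdown : ∀ j, down j ∈ L := fun j =>
    inf_induction huniv (fun _ h₁ _ h₂ => (hcl _ h₁ _ h₂).2) fun _ hT => (mem_filter.1 hT).2.1
  have hS_eq : S = S.sup down := by
    ext i
    simp only [down, mem_sup, mem_inf, mem_filter, mem_univ, true_and, id]
    exact ⟨fun hi => ⟨i, hi, fun _ hT => hT.2⟩,
      fun ⟨j, hj, hij⟩ => hS (fun T hT hjT => hij T ⟨hT, hjT⟩) hj⟩
  rw [hS_eq]
  exact sup_induction hempty (fun _ h₁ _ h₂ => (hcl _ h₁ _ h₂).1) fun j _ => hdown j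

end LatticeRel

section Unmixed

variable {n : ℕ} {G : SimpleGraph (Fin n ⊕ Fin n)}

lemma isVC_coverOf_empty (hB : Bip G) : IsVC G (coverOf ∅) := by
  rintro (i | i) (j | j) h
  · exact (hB.1 i j h).elim
  · simp
  · simp
  · exact (hB.2 i j h).elim

lemma eq_coverOf_xpart_of_unmixed (hB : Bip G) (hM : ∀ i, G.Adj (Sum.inl i) (Sum.inr i))
    (hU : Unmixed G) {C : Finset (Fin n ⊕ Fin n)} (hC : IsMinVC G C) :
    C = coverOf (xpart C) := by
  refine (eq_of_subset_of_card_le (coverOf_xpart_subset hM hC.1) ?_).symm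
  rw [hU C _ hC ((isVC_coverOf_empty hB).isMinVC_coverOf hM), card_coverOf, card_coverOf]

lemma exists_mem_latticeOf_of_not_adj (hB : Bip G) (hM : ∀ i, G.Adj (Sum.inl i) (Sum.inr i))
    {a c : Fin n} (h : ¬ G.Adj (Sum.inl a) (Sum.inr c)) :
    ∃ S ∈ latticeOf G, c ∈ S ∧ a ∉ S := by
  classical
  obtain ⟨C, hsub, hC⟩ :=
    ((isVC_coverOf_empty hB).erase_union_neighbors (Sum.inr c)).exists_isMinVC_subset
  have hyc : Sum.inr c ∉ C := fun hc => by simpa using hsub hc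
  have hxa : Sum.inl a ∉ C := fun ha => by simpa [G.adj_comm, h] using hsub ha
  exact ⟨xpart C, ⟨C, hC, rfl⟩, mem_xpart.2 ((hC.1 (hM c)).resolve_right hyc),
    fun ha => hxa (mem_xpart.1 ha)⟩

lemma adj_inl_inr_iff_latticeRel (hB : Bip G) (hM : ∀ i, G.Adj (Sum.inl i) (Sum.inr i))
    (hU : Unmixed G) {a c : Fin n} :
    G.Adj (Sum.inl a) (Sum.inr c) ↔ latticeRel (latticeOf G) a c := by
  have hL := latticeOf_eq_setOf_isVC hM fun _ => eq_coverOf_xpart_of_unmixed hB hM hU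
  constructor
  · intro hac S hS hc
    rw [hL] at hS
    simpa [hc] using hS hac
  · intro h
    by_contra hac
    obtain ⟨S, hS, hc, ha⟩ := exists_mem_latticeOf_of_not_adj hB hM hac
    exact ha (h S hS hc)

lemma eq_bipartiteOfRel_latticeRel (hB : Bip G) (hM : ∀ i, G.Adj (Sum.inl i) (Sum.inr i))
    (hU : Unmixed G) : G = bipartiteOfRel (latticeRel (latticeOf G)) := by
  ext u v
  rcases u with i | i <;> rcases v with j | j
  · exact iff_of_false (hB.1 i j) id
  · exact adj_inl_inr_iff_latticeRel hB hM hU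
  · exact G.adj_comm _ _ |>.trans (adj_inl_inr_iff_latticeRel hB hM hU)
  · exact iff_of_false (hB.2 i j) id

end Unmixed

/-- `G ↦ L_G` is a bijection between unmixed bipartite graphs containing
the matching `{x_i,y_i}` and sublattices of the Boolean lattice containing `∅` and `[n]`;
in particular distinct graphs have distinct lattices. -/
theorem stmt_7 {n : ℕ} :
    (∀ G G' : SimpleGraph (Fin n ⊕ Fin n),
      Bip G → (∀ i, G.Adj (Sum.inl i) (Sum.inr i)) → Unmixed G →
      Bip G' → (∀ i, G'.Adj (Sum.inl i) (Sum.inr i)) → Unmixed G' →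
      latticeOf G = latticeOf G' → G = G') ∧
    (∀ L : Set (Finset (Fin n)),
      (∅ : Finset (Fin n)) ∈ L → (Finset.univ : Finset (Fin n)) ∈ L →
      (∀ S ∈ L, ∀ T ∈ L, S ∪ T ∈ L ∧ S ∩ T ∈ L) →
      ∃ G : SimpleGraph (Fin n ⊕ Fin n),
        Bip G ∧ (∀ i, G.Adj (Sum.inl i) (Sum.inr i)) ∧ Unmixed G ∧
          latticeOf G = L) := by
  refine ⟨fun G G' hB hM hU hB' hM' hU' hL => ?_, fun L hempty huniv hcl => ?_⟩
  · rw [eq_bipartiteOfRel_latticeRel hB hM hU, eq_bipartiteOfRel_latticeRel hB' hM' hU', hL]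
  · refine ⟨bipartiteOfRel (latticeRel L), bip_bipartiteOfRel, latticeRel_refl,
      unmixed_bipartiteOfRel latticeRel_refl fun _ _ _ => latticeRel_trans, ?_⟩
    rw [latticeOf_bipartiteOfRel latticeRel_refl fun _ _ _ => latticeRel_trans]
    ext S
    exact isLowerFor_latticeRel_iff hempty huniv hcl
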